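/- arXiv:2402.00178 — 2 statements merged into one kernel-verified Lean document; each statement's English description precedes it below -/
import Mathlib

section
/- (Small-divisor estimate.) Let d ≥ 1, τ > 0, γ > 0, 0 < δ < ξ ≤ 1, and let ω ∈ ℝ^d satisfy |⟨ω, n⟩| ≥ γ/|n|₁^τ for all nonzero n ∈ ℤ^d. Let M ≥ 0 and let u_n ∈ ℂ, for n ∈ ℤ^d \ {0}, satisfy |u_n| ≤ M e^{−|n|₁ ξ}. Then the series (D_ω^{−1} u)(x) := Σ_{n ≠ 0} (u_n/(i⟨ω, n⟩)) e^{i⟨n, x⟩} converges absolutely for every x ∈ ℂ^d with |Im x_j| ≤ ξ − δ, and there is a constant c > 0 depending only on d and τ such that for all such x: |(D_ω^{−1} u)(x)| ≤ c δ^{−(τ + d)} γ^{−1} M. -/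
/-- Standard inner product on `Fin d → ℝ`. -/
def dotR {d : ℕ} (v w : Fin d → ℝ) : ℝ := ∑ i, v i * w i

/-- 1-norm of an integer vector, as a real number. -/
def oneNorm {d : ℕ} (n : Fin d → ℤ) : ℝ := ∑ i, |(n i : ℝ)|

/-!
The `n`-th term of the series has modulus at most `M γ⁻¹ |n|₁^τ e^{-δ|n|₁}`: the Diophantine
condition costs `|n|₁^τ / γ`, while the strip `|Im x| ≤ ξ - δ` eats all but `e^{-δ|n|₁}` of
the decay of `u`. Half of the remaining exponential absorbs the polynomial factor, since
`t^τ ≤ (2τ/δ)^τ e^{δt/2}`, and the other half is summed over `ℤ^d` as a product of `d`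
two-sided geometric series, each at most `6/δ`.
-/

open Real

theorem HasSum.fin_pi_prod {ι : Type*} {w : ι → ℝ} {s : ℝ} (hw : 0 ≤ w) (h : HasSum w s)
    (d : ℕ) : HasSum (fun n : Fin d → ι => ∏ i, w (n i)) (s ^ d) := by
  induction d with
  | zero => simp
  | succ d ih =>
    have hprod := h.mul ih <| Summable.mul_of_nonneg (g := fun n : Fin d → ι => ∏ i, w (n i))
      h.summable ih.summable hw fun n => Finset.prod_nonneg fun i _ => hw (n i)
    rw [pow_succ', ← (Fin.consEquiv fun _ => ι).hasSum_iff]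
    simpa [Function.comp_def, Fin.prod_univ_succ] using hprod

theorem hasSum_exp_neg_mul_abs {a : ℝ} (ha : 0 < a) :
    HasSum (fun m : ℤ => exp (-(a * |(m : ℝ)|))) (2 * (1 - exp (-a))⁻¹ - 1) := by
  have hgeom := hasSum_geometric_of_lt_one (exp_pos (-a)).le (exp_lt_one_iff.mpr (by linarith))
  have hpow : ∀ k : ℕ, exp (-a) ^ k = exp (-(a * k)) := fun k => by
    rw [← exp_nat_mul]; ring_nf
  simp only [hpow] at hgeom
  have := HasSum.of_nat_of_neg (f := fun m : ℤ => exp (-(a * |(m : ℝ)|)))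
    (by simpa using hgeom) (by simpa using hgeom)
  rwa [Int.cast_zero, abs_zero, mul_zero, neg_zero, exp_zero, ← two_mul] at this

theorem two_mul_inv_one_sub_exp_neg_sub_one_le {a : ℝ} (ha : 0 < a) (ha1 : a ≤ 1) :
    2 * (1 - exp (-a))⁻¹ - 1 ≤ 3 / a := by
  have hexp : exp (-a) ≤ (1 + a)⁻¹ := by
    rw [exp_neg]; exact inv_anti₀ (by linarith) (by linarith [add_one_le_exp a])
  have hgap : a / (1 + a) ≤ 1 - exp (-a) := by
    have : a / (1 + a) = 1 - (1 + a)⁻¹ := by field_simp; ring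
    linarith
  calc 2 * (1 - exp (-a))⁻¹ - 1 ≤ 2 * (a / (1 + a))⁻¹ - 1 := by
        gcongr
    _ = 2 / a + 1 := by field_simp; ring
    _ ≤ 3 / a := by rw [div_add_one ha.ne', div_le_div_iff_of_pos_right ha]; linarith

theorem exp_neg_mul_oneNorm_eq_prod {d : ℕ} (a : ℝ) (n : Fin d → ℤ) :
    exp (-(a * oneNorm n)) = ∏ i, exp (-(a * |(n i : ℝ)|)) := by
  rw [← exp_sum, oneNorm, Finset.mul_sum, Finset.sum_neg_distrib]

theorem hasSum_exp_neg_mul_oneNorm (d : ℕ) {a : ℝ} (ha : 0 < a) :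
    HasSum (fun n : Fin d → ℤ => exp (-(a * oneNorm n))) ((2 * (1 - exp (-a))⁻¹ - 1) ^ d) := by
  simpa only [exp_neg_mul_oneNorm_eq_prod] using
    (hasSum_exp_neg_mul_abs ha).fin_pi_prod (fun m => (exp_pos _).le) d

theorem rpow_le_mul_exp {τ a t : ℝ} (hτ : 0 < τ) (ha : 0 < a) (ht : 0 ≤ t) :
    t ^ τ ≤ (τ / a) ^ τ * exp (a * t) := by
  have hs : 0 ≤ a * t / τ := by positivity
  calc t ^ τ = (τ / a) ^ τ * (a * t / τ) ^ τ := by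
        rw [← mul_rpow (by positivity) hs]; congr 1; field_simp
    _ ≤ (τ / a) ^ τ * exp (a * t / τ) ^ τ := by
        gcongr; linarith [add_one_le_exp (a * t / τ)]
    _ = (τ / a) ^ τ * exp (a * t) := by rw [← exp_mul, div_mul_cancel₀ _ hτ.ne']

theorem rpow_mul_exp_neg_le {τ a t : ℝ} (hτ : 0 < τ) (ha : 0 < a) (ht : 0 ≤ t) :
    t ^ τ * exp (-(a * t)) ≤ (2 * τ / a) ^ τ * exp (-(a / 2 * t)) := by
  have h := rpow_le_mul_exp hτ (half_pos ha) ht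
  rw [div_div_eq_mul_div, mul_comm τ] at h
  calc t ^ τ * exp (-(a * t)) ≤ (2 * τ / a) ^ τ * exp (a / 2 * t) * exp (-(a * t)) := by gcongr
    _ = (2 * τ / a) ^ τ * exp (-(a / 2 * t)) := by rw [mul_assoc, ← exp_add]; ring_nf

theorem oneNorm_pos {d : ℕ} {n : Fin d → ℤ} (hn : n ≠ 0) : 0 < oneNorm n := by
  obtain ⟨j, hj⟩ := Function.ne_iff.mp hn
  exact lt_of_lt_of_le (by simpa using hj)
    (Finset.single_le_sum (f := fun i => |(n i : ℝ)|) (fun i _ => abs_nonneg _)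
      (Finset.mem_univ j))

theorem norm_cexp_I_mul_sum_le {d : ℕ} {η : ℝ} (n : Fin d → ℤ) {x : Fin d → ℂ}
    (hx : ∀ j, |(x j).im| ≤ η) :
    ‖Complex.exp (Complex.I * ∑ i, (n i : ℂ) * x i)‖ ≤ exp (oneNorm n * η) := by
  have hre : (Complex.I * ∑ i, (n i : ℂ) * x i).re = ∑ i, -((n i : ℝ) * (x i).im) := by
    simp [Complex.mul_re, Complex.re_sum, Complex.im_sum]
  rw [Complex.norm_exp, hre, oneNorm, Finset.sum_mul]
  gcongr with i
  calc -((n i : ℝ) * (x i).im) ≤ |(n i : ℝ)| * |(x i).im| := by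
        rw [← abs_mul]; exact neg_le_abs _
    _ ≤ |(n i : ℝ)| * η := by gcongr; exact hx i

/-- The `n`-th term of the Fourier series of `D_ω⁻¹ u` at `x`. -/
noncomputable def invDerivTerm {d : ℕ} (ω : Fin d → ℝ) (u : (Fin d → ℤ) → ℂ) (x : Fin d → ℂ)
    (n : Fin d → ℤ) : ℂ :=
  u n / (Complex.I * (dotR ω fun i => (n i : ℝ))) * Complex.exp (Complex.I * ∑ i, (n i : ℂ) * x i)

theorem norm_invDerivTerm_le {d : ℕ} {τ γ ξ δ M : ℝ} {ω : Fin d → ℝ} {u : (Fin d → ℤ) → ℂ}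
    {x : Fin d → ℂ} {n : Fin d → ℤ} (hτ : 0 < τ) (hγ : 0 < γ) (hδ : 0 < δ) (hn : n ≠ 0)
    (hω : γ / oneNorm n ^ τ ≤ |dotR ω fun i => (n i : ℝ)|)
    (hu : ‖u n‖ ≤ M * exp (-(oneNorm n * ξ))) (hx : ∀ j, |(x j).im| ≤ ξ - δ) :
    ‖invDerivTerm ω u x n‖ ≤ M * γ⁻¹ * (2 * τ / δ) ^ τ * exp (-(δ / 2 * oneNorm n)) := by
  have ht := oneNorm_pos hn
  have hM : 0 ≤ M := (mul_nonneg_iff_of_pos_right (exp_pos _)).mp ((norm_nonneg _).trans hu)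
  have hdivisor : |dotR ω fun i => (n i : ℝ)|⁻¹ ≤ oneNorm n ^ τ * γ⁻¹ := by
    have h := inv_anti₀ (by positivity) hω
    rwa [inv_div, div_eq_mul_inv] at h
  calc ‖invDerivTerm ω u x n‖
      = ‖u n‖ * |dotR ω fun i => (n i : ℝ)|⁻¹ *
          ‖Complex.exp (Complex.I * ∑ i, (n i : ℂ) * x i)‖ := by
        simp [invDerivTerm, div_eq_mul_inv]
    _ ≤ M * exp (-(oneNorm n * ξ)) * (oneNorm n ^ τ * γ⁻¹) * exp (oneNorm n * (ξ - δ)) := by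
        gcongr
        exact norm_cexp_I_mul_sum_le n hx
    _ = M * γ⁻¹ * (oneNorm n ^ τ * exp (-(δ * oneNorm n))) := by
        have hexp :
            exp (-(oneNorm n * ξ)) * exp (oneNorm n * (ξ - δ)) = exp (-(δ * oneNorm n)) := by
          rw [← exp_add]; ring_nf
        rw [← hexp]; ring
    _ ≤ M * γ⁻¹ * ((2 * τ / δ) ^ τ * exp (-(δ / 2 * oneNorm n))) :=
        mul_le_mul_of_nonneg_left (rpow_mul_exp_neg_le hτ hδ ht.le) (by positivity)
    _ = M * γ⁻¹ * (2 * τ / δ) ^ τ * exp (-(δ / 2 * oneNorm n)) := by ring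

theorem small_divisor_series_estimate_general (d : ℕ) (τ : ℝ) (hτ : 0 < τ) :
    ∃ c : ℝ, 0 < c ∧
      ∀ (γ ξ δ : ℝ), 0 < γ → 0 < δ → δ < ξ → ξ ≤ 1 →
      ∀ ω : Fin d → ℝ,
        (∀ n : Fin d → ℤ, n ≠ 0 → γ / oneNorm n ^ τ ≤ |dotR ω (fun i => (n i : ℝ))|) →
      ∀ (M : ℝ), 0 ≤ M →
      ∀ u : (Fin d → ℤ) → ℂ,
        (∀ n : Fin d → ℤ, n ≠ 0 → ‖u n‖ ≤ M * Real.exp (-(oneNorm n * ξ))) →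
      ∀ x : Fin d → ℂ, (∀ j, |(x j).im| ≤ ξ - δ) →
        Summable (fun n : {n : Fin d → ℤ // n ≠ 0} =>
          ‖u n.1 / (Complex.I * (dotR ω fun i => (n.1 i : ℝ))) *
            Complex.exp (Complex.I * ∑ i, (n.1 i : ℂ) * x i)‖) ∧
        ‖∑' n : {n : Fin d → ℤ // n ≠ 0},
            u n.1 / (Complex.I * (dotR ω fun i => (n.1 i : ℝ))) *
              Complex.exp (Complex.I * ∑ i, (n.1 i : ℂ) * x i)‖ ≤
          c * δ ^ (-(τ + (d : ℝ))) * γ⁻¹ * M := by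
  refine ⟨(2 * τ) ^ τ * 6 ^ d, by positivity, fun γ ξ δ hγ hδ hδξ hξ ω hω M hM u hu x hx => ?_⟩
  change Summable (fun n : {n : Fin d → ℤ // n ≠ 0} => ‖invDerivTerm ω u x n‖) ∧
    ‖∑' n : {n : Fin d → ℤ // n ≠ 0}, invDerivTerm ω u x n‖ ≤ _
  set C := M * γ⁻¹ * (2 * τ / δ) ^ τ with hC
  have hweights := hasSum_exp_neg_mul_oneNorm d (half_pos hδ)
  have hbound (n : {n : Fin d → ℤ // n ≠ 0}) :
      ‖invDerivTerm ω u x n‖ ≤ C * exp (-(δ / 2 * oneNorm n.1)) :=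
    norm_invDerivTerm_le hτ hγ hδ n.2 (hω n n.2) (hu n n.2) hx
  have hmajorant :
      Summable fun n : {n : Fin d → ℤ // n ≠ 0} => C * exp (-(δ / 2 * oneNorm n.1)) :=
    (hweights.summable.subtype _).mul_left C
  have hsummable := hmajorant.of_nonneg_of_le (fun _ => norm_nonneg _) hbound
  refine ⟨hsummable, ?_⟩
  calc ‖∑' n : {n : Fin d → ℤ // n ≠ 0}, invDerivTerm ω u x n‖
      ≤ ∑' n : {n : Fin d → ℤ // n ≠ 0}, C * exp (-(δ / 2 * oneNorm n.1)) :=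
        (norm_tsum_le_tsum_norm hsummable).trans (hsummable.tsum_le_tsum hbound hmajorant)
    _ ≤ C * ∑' n : Fin d → ℤ, exp (-(δ / 2 * oneNorm n)) := by
        rw [tsum_mul_left]
        gcongr
        exact hweights.summable.tsum_subtype_le _ {n | n ≠ 0} (fun _ => (exp_pos _).le)
    _ ≤ C * (3 / (δ / 2)) ^ d := by
        rw [hweights.tsum_eq]
        gcongr
        · exact (hasSum_exp_neg_mul_abs (half_pos hδ)).nonneg fun _ => (exp_pos _).le
        · exact two_mul_inv_one_sub_exp_neg_sub_one_le (half_pos hδ) (by linarith)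
    _ = (2 * τ) ^ τ * 6 ^ d * δ ^ (-(τ + (d : ℝ))) * γ⁻¹ * M := by
        rw [hC, show 3 / (δ / 2) = 6 / δ by ring, div_pow, div_rpow (by positivity) hδ.le,
          rpow_neg hδ.le, rpow_add hδ, rpow_natCast]
        field_simp

/-- Small-divisor estimate: if `ω` is Diophantine (`|⟨ω,n⟩| ≥ γ/|n|₁^τ`) and
`|u_n| ≤ M e^(−|n|₁ξ)`, then the series `(D_ω⁻¹u)(x) = Σ_{n≠0} u_n/(i⟨ω,n⟩) e^(i⟨n,x⟩)`
converges absolutely for `|Im x_j| ≤ ξ − δ` and is bounded there by `c δ^(−(τ+d)) γ⁻¹ M`,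
with `c = c(d,τ)`. -/
theorem small_divisor_series_estimate (d : ℕ) (hd : 1 ≤ d) (τ : ℝ) (hτ : 0 < τ) :
    ∃ c : ℝ, 0 < c ∧
      ∀ (γ ξ δ : ℝ), 0 < γ → 0 < δ → δ < ξ → ξ ≤ 1 →
      ∀ ω : Fin d → ℝ,
        (∀ n : Fin d → ℤ, n ≠ 0 → γ / oneNorm n ^ τ ≤ |dotR ω (fun i => (n i : ℝ))|) →
      ∀ (M : ℝ), 0 ≤ M →
      ∀ u : (Fin d → ℤ) → ℂ,
        (∀ n : Fin d → ℤ, n ≠ 0 → ‖u n‖ ≤ M * Real.exp (-(oneNorm n * ξ))) →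
      ∀ x : Fin d → ℂ, (∀ j, |(x j).im| ≤ ξ - δ) →
        Summable (fun n : {n : Fin d → ℤ // n ≠ 0} =>
          ‖u n.1 / (Complex.I * (dotR ω fun i => (n.1 i : ℝ))) *
            Complex.exp (Complex.I * ∑ i, (n.1 i : ℂ) * x i)‖) ∧
        ‖∑' n : {n : Fin d → ℤ // n ≠ 0},
            u n.1 / (Complex.I * (dotR ω fun i => (n.1 i : ℝ))) *
              Complex.exp (Complex.I * ∑ i, (n.1 i : ℂ) * x i)‖ ≤
          c * δ ^ (-(τ + (d : ℝ))) * γ⁻¹ * M :=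
  small_divisor_series_estimate_general d τ hτ
end

section
/- Let d ≥ 1, τ > d − 1, let B ⊆ ℝ^d be a closed ball, and let ω₀ : B → ℝ^d be injective with L-Lipschitz inverse on its image, i.e. ‖y − y'‖ ≤ L ‖ω₀(y) − ω₀(y')‖ for all y, y' ∈ B. For γ > 0 set B_γ = {y ∈ B : ω₀(y) is (γ,τ)-Diophantine}. Then there exists a constant c' > 0, depending only on d, τ, L and the diameter of ω₀(B), such that the Lebesgue outer measure of B \ B_γ satisfies volume(B \ B_γ) ≤ c' γ for every γ > 0. -/
open MeasureTheory Set

/-- Euclidean norm on `Fin d → ℝ`. -/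
noncomputable def eNorm {d : ℕ} (v : Fin d → ℝ) : ℝ := Real.sqrt (∑ i, v i ^ 2)

/-- `ω` is `(γ,τ)`-Diophantine: `|⟨ω,n⟩| ≥ γ/‖n‖^τ` for every nonzero integer vector `n`. -/
def IsDiophantine {d : ℕ} (γ τ : ℝ) (ω : Fin d → ℝ) : Prop :=
  ∀ n : Fin d → ℤ, n ≠ 0 →
    γ / eNorm (fun i => (n i : ℝ)) ^ τ ≤ |dotR ω (fun i => (n i : ℝ))|

/-!
The complement of `B_γ` in `B` is covered by the resonant zones
`{y ∈ B : |⟨ω₀ y, n⟩| < γ / ‖n‖^τ}`, `n ∈ ℤ^d \ {0}`. Since `ω₀⁻¹` is Lipschitz on `ω₀(B)`, a zone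
has volume at most a constant times that of its image, which lies in the slab
`|⟨x, n⟩| < γ / ‖n‖^τ`, of width `2γ / ‖n‖^(τ+1)`, intersected with a fixed cube containing `ω₀(B)`.
So each zone has volume `O(γ ‖n‖^(-(τ+1)))`, and these bounds are summable over `ℤ^d` because
`τ + 1 > d`.
-/

open scoped ENNReal NNReal

lemma summable_pi_int_norm_rpow_neg {ι : Type*} [Fintype ι] {p : ℝ} (hp : Fintype.card ι < p) :
    Summable fun n : ι → ℤ => ‖n‖ ^ (-p) := by
  set L := Submodule.span ℤ (range (Pi.basisFun ℝ ι))
  have hrank : Module.finrank ℤ L = Fintype.card ι := by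
    rw [ZLattice.rank ℝ L, Module.finrank_fintype_fun_eq_card]
  have hmem : ∀ n : ι → ℤ, (fun i => (n i : ℝ)) ∈ L := fun n =>
    ((Pi.basisFun ℝ ι).mem_span_iff_repr_mem ℤ _).2 fun i => ⟨n i, by simp⟩
  let f : (ι → ℤ) → L := fun n => ⟨fun i => (n i : ℝ), hmem n⟩
  have hf : Function.Injective f := fun m n h =>
    funext fun i => Int.cast_injective (α := ℝ) (congrFun (congrArg Subtype.val h) i)
  have hnorm : ∀ n, ‖f n‖ = ‖n‖ := fun n => rfl
  exact ((ZLattice.summable_norm_rpow L (-p) (by rw [hrank]; linarith)).comp_injective hf).congr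
    fun n => by simp only [Function.comp_apply, hnorm]

theorem Pi.exists_norm_eq_norm_apply {ι E : Type*} [Fintype ι] [Nonempty ι]
    [SeminormedAddCommGroup E] (v : ι → E) : ∃ i, ‖v‖ = ‖v i‖ := by
  obtain ⟨i, -, hi⟩ := Finset.exists_mem_eq_sup Finset.univ Finset.univ_nonempty (‖v ·‖₊)
  exact ⟨i, by rw [← coe_nnnorm, Pi.nnnorm_def, hi, coe_nnnorm]⟩

lemma volume_le_pow_mul_volume_image {ι : Type*} [Fintype ι] {K : ℝ≥0} {f : (ι → ℝ) → ι → ℝ}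
    {s : Set (ι → ℝ)} (hf : ∀ y ∈ s, ∀ y' ∈ s, dist y y' ≤ K * dist (f y) (f y')) :
    volume s ≤ (K : ℝ≥0∞) ^ Fintype.card ι * volume (f '' s) := by
  have hinj : InjOn f s := fun y hy y' hy' h =>
    dist_le_zero.1 (by simpa [h] using hf y hy y' hy')
  have hlip : LipschitzOnWith K (Function.invFunOn f s) (f '' s) := by
    refine LipschitzOnWith.of_dist_le_mul ?_
    rintro _ ⟨y, hy, rfl⟩ _ ⟨y', hy', rfl⟩
    rw [hinj.leftInvOn_invFunOn hy, hinj.leftInvOn_invFunOn hy']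
    exact hf y hy y' hy'
  simpa only [hinj.leftInvOn_invFunOn.image_image, hausdorffMeasure_pi_real,
    ENNReal.rpow_natCast] using hlip.hausdorffMeasure_image_le (Nat.cast_nonneg (Fintype.card ι))

theorem Matrix.det_one_updateRow {n R : Type*} [Fintype n] [DecidableEq n] [CommRing R] (i : n)
    (c : n → R) : ((1 : Matrix n n R).updateRow i c).det = c i := by
  have hc : ∑ k, c k • (1 : Matrix n n R) k = c := by
    ext j; simp [Matrix.one_apply]
  conv_lhs => rw [← hc]
  simp [Matrix.det_updateRow_sum]

section

variable {d : ℕ}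

lemma eNorm_nonneg (v : Fin d → ℝ) : 0 ≤ eNorm v := Real.sqrt_nonneg _

lemma abs_le_eNorm (v : Fin d → ℝ) (i : Fin d) : |v i| ≤ eNorm v := by
  rw [eNorm, ← Real.sqrt_sq_eq_abs]
  exact Real.sqrt_le_sqrt (Finset.single_le_sum (f := fun j => v j ^ 2)
    (fun j _ => sq_nonneg _) (Finset.mem_univ i))

lemma norm_le_eNorm (v : Fin d → ℝ) : ‖v‖ ≤ eNorm v :=
  (pi_norm_le_iff_of_nonneg (eNorm_nonneg v)).2 fun i => abs_le_eNorm v i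

lemma eNorm_le_sqrt_mul_norm (v : Fin d → ℝ) : eNorm v ≤ √d * ‖v‖ := by
  rw [eNorm, ← Real.sqrt_sq (norm_nonneg v), ← Real.sqrt_mul (Nat.cast_nonneg d)]
  refine Real.sqrt_le_sqrt ?_
  calc ∑ i, v i ^ 2 ≤ ∑ _i : Fin d, ‖v‖ ^ 2 := Finset.sum_le_sum fun i _ => by
        simpa only [Real.norm_eq_abs, sq_abs] using
          pow_le_pow_left₀ (norm_nonneg _) (norm_le_pi_norm v i) 2
    _ = d * ‖v‖ ^ 2 := by simp

lemma dist_le_of_eNorm_sub_le {L : ℝ} {y y' x x' : Fin d → ℝ}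
    (h : eNorm (y - y') ≤ L * eNorm (x - x')) :
    dist y y' ≤ (L.toNNReal * NNReal.sqrt d : ℝ≥0) * dist x x' := by
  calc dist y y' ≤ eNorm (y - y') := dist_eq_norm y y' ▸ norm_le_eNorm _
    _ ≤ L.toNNReal * eNorm (x - x') :=
        h.trans (mul_le_mul_of_nonneg_right (Real.le_coe_toNNReal L) (eNorm_nonneg _))
    _ ≤ L.toNNReal * (√d * dist x x') := by
        rw [dist_eq_norm]; gcongr; exact eNorm_le_sqrt_mul_norm _
    _ = (L.toNNReal * NNReal.sqrt d : ℝ≥0) * dist x x' := by push_cast; ring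

lemma summable_eNorm_intCast_rpow_neg {p : ℝ} (hp : d < p) :
    Summable fun n : Fin d → ℤ => eNorm (fun i => (n i : ℝ)) ^ (-p) := by
  refine (summable_pi_int_norm_rpow_neg (by simpa using hp)).of_nonneg_of_le
    (fun n => Real.rpow_nonneg (eNorm_nonneg _) _) fun n => ?_
  rcases eq_or_ne n 0 with rfl | hn
  · simp [eNorm]
  · exact Real.rpow_le_rpow_of_nonpos (norm_pos_iff.2 hn) (norm_le_eNorm (fun i => (n i : ℝ)))
      (by linarith [(Nat.cast_nonneg d : (0 : ℝ) ≤ d)])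

lemma one_updateRow_mulVec (v x : Fin d → ℝ) (i : Fin d) :
    ((1 : Matrix (Fin d) (Fin d) ℝ).updateRow i v).mulVec x = Function.update x i (dotR x v) := by
  ext j
  rcases eq_or_ne j i with rfl | hj
  · simp [Matrix.mulVec, dotProduct, dotR, mul_comm]
  · simp [Matrix.mulVec, dotProduct, Matrix.one_apply, hj]

lemma volume_slab_le (v : Fin d → ℝ) {i : Fin d} (hi : v i ≠ 0) {δ R : ℝ} (hδ : 0 ≤ δ)
    (hR : 0 ≤ R) :
    volume {x : Fin d → ℝ | |dotR x v| ≤ δ ∧ ‖x‖ ≤ R} ≤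
      ENNReal.ofReal (|v i|⁻¹ * (2 * δ) * (2 * R) ^ (d - 1)) := by
  -- `A` replaces the `i`-th coordinate by `⟨x, v⟩`: it maps the slab into a box, and `det A = v i`.
  set A := Matrix.toLin' ((1 : Matrix (Fin d) (Fin d) ℝ).updateRow i v)
  have hA : LinearMap.det A = v i := by
    rw [LinearMap.det_toLin', Matrix.det_one_updateRow]
  set box : Set (Fin d → ℝ) := univ.pi (Function.update (fun _ => Icc (-R) R) i (Icc (-δ) δ))
  have hsub : {x : Fin d → ℝ | |dotR x v| ≤ δ ∧ ‖x‖ ≤ R} ⊆ A ⁻¹' box := by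
    rintro x ⟨hxv, hx⟩ j -
    rw [Matrix.toLin'_apply, one_updateRow_mulVec]
    rcases eq_or_ne j i with rfl | hj
    · simpa using abs_le.1 hxv
    · simpa [hj] using abs_le.1 ((norm_le_pi_norm x j).trans hx)
  have hbox : volume box = ENNReal.ofReal (2 * δ) * ENNReal.ofReal (2 * R) ^ (d - 1) := by
    simp only [box, volume_pi_pi, Function.apply_update (fun _ => (volume : Measure ℝ)),
      Finset.prod_update_of_mem (Finset.mem_univ i), Real.volume_Icc, Finset.prod_const,
      Finset.card_sdiff, Finset.card_univ]
    simp [two_mul]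
  calc volume {x : Fin d → ℝ | |dotR x v| ≤ δ ∧ ‖x‖ ≤ R} ≤ volume (A ⁻¹' box) := measure_mono hsub
    _ = ENNReal.ofReal |(v i)⁻¹| * volume box := by
      rw [Measure.addHaar_preimage_linearMap _ (hA ▸ hi), hA]
    _ = ENNReal.ofReal (|v i|⁻¹ * (2 * δ) * (2 * R) ^ (d - 1)) := by
      rw [hbox, ← ENNReal.ofReal_pow (by positivity), ← ENNReal.ofReal_mul (by positivity),
        ← ENNReal.ofReal_mul (by positivity), abs_inv, ← mul_assoc]

lemma volume_slab_le_eNorm {v : Fin d → ℝ} (hv : v ≠ 0) {δ R : ℝ} (hδ : 0 ≤ δ)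
    (hR : 0 ≤ R) :
    volume {x : Fin d → ℝ | |dotR x v| ≤ δ ∧ ‖x‖ ≤ R} ≤
      ENNReal.ofReal (√d * 2 * (2 * R) ^ (d - 1) * (δ / eNorm v)) := by
  obtain ⟨j, -⟩ := Function.ne_iff.1 hv
  have : Nonempty (Fin d) := ⟨j⟩
  obtain ⟨i, hi⟩ := Pi.exists_norm_eq_norm_apply v
  rw [Real.norm_eq_abs] at hi
  have hvi : 0 < |v i| := hi ▸ norm_pos_iff.2 hv
  refine (volume_slab_le v (abs_pos.1 hvi) hδ hR).trans (ENNReal.ofReal_le_ofReal ?_)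
  have hinv : |v i|⁻¹ ≤ √d / eNorm v := by
    rw [inv_eq_one_div, div_le_div_iff₀ hvi ((hi ▸ hvi).trans_le (norm_le_eNorm v)), one_mul, ← hi]
    exact eNorm_le_sqrt_mul_norm v
  calc |v i|⁻¹ * (2 * δ) * (2 * R) ^ (d - 1) ≤ √d / eNorm v * (2 * δ) * (2 * R) ^ (d - 1) := by
        gcongr
    _ = _ := by ring

def resonantZone (f : (Fin d → ℝ) → Fin d → ℝ) (s : Set (Fin d → ℝ)) (γ τ : ℝ)
    (n : Fin d → ℤ) : Set (Fin d → ℝ) :=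
  {y ∈ s | n ≠ 0 ∧ |dotR (f y) (fun i => (n i : ℝ))| < γ / eNorm (fun i => (n i : ℝ)) ^ τ}

lemma diff_setOf_isDiophantine_subset_iUnion_resonantZone (f : (Fin d → ℝ) → Fin d → ℝ)
    (s : Set (Fin d → ℝ)) (γ τ : ℝ) :
    s \ {y ∈ s | IsDiophantine γ τ (f y)} ⊆ ⋃ n, resonantZone f s γ τ n := by
  rintro y ⟨hys, hy⟩
  have hnot : ¬ IsDiophantine γ τ (f y) := fun h => hy ⟨hys, h⟩
  simp only [IsDiophantine, not_forall, not_le] at hnot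
  obtain ⟨n, hn, hlt⟩ := hnot
  exact mem_iUnion.2 ⟨n, hys, hn, hlt⟩

lemma volume_resonantZone_le {K : ℝ≥0} {f : (Fin d → ℝ) → Fin d → ℝ}
    {s : Set (Fin d → ℝ)} (hf : ∀ y ∈ s, ∀ y' ∈ s, dist y y' ≤ K * dist (f y) (f y'))
    {R : ℝ} (hR : ∀ y ∈ s, ‖f y‖ ≤ R) (hR0 : 0 ≤ R) {γ : ℝ} (hγ : 0 ≤ γ) (τ : ℝ)
    (n : Fin d → ℤ) :
    volume (resonantZone f s γ τ n) ≤ ENNReal.ofReal ((K : ℝ) ^ d * (√d * 2 * (2 * R) ^ (d - 1)) *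
      γ * eNorm (fun i => (n i : ℝ)) ^ (-(τ + 1))) := by
  rcases eq_or_ne n 0 with rfl | hn
  · simp [resonantZone]
  set v : Fin d → ℝ := fun i => (n i : ℝ)
  have hv : v ≠ 0 := fun h => hn (funext fun i => by simpa [v] using congrFun h i)
  have he : 0 < eNorm v := (norm_pos_iff.2 hv).trans_le (norm_le_eNorm v)
  have himage : f '' resonantZone f s γ τ n ⊆
      {x | |dotR x v| ≤ γ / eNorm v ^ τ ∧ ‖x‖ ≤ R} := by
    rintro _ ⟨y, ⟨hy, -, hlt⟩, rfl⟩
    exact ⟨hlt.le, hR y hy⟩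
  have hδ : γ / eNorm v ^ τ / eNorm v = γ * eNorm v ^ (-(τ + 1)) := by
    rw [Real.rpow_neg he.le, Real.rpow_add_one he.ne', div_div, div_eq_mul_inv]
  calc volume (resonantZone f s γ τ n)
      ≤ (K : ℝ≥0∞) ^ d * volume (f '' resonantZone f s γ τ n) := by
        simpa only [Fintype.card_fin] using
          volume_le_pow_mul_volume_image fun y hy y' hy' => hf y hy.1 y' hy'.1
    _ ≤ (K : ℝ≥0∞) ^ d *
          ENNReal.ofReal (√d * 2 * (2 * R) ^ (d - 1) * (γ / eNorm v ^ τ / eNorm v)) := by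
        gcongr
        exact (measure_mono himage).trans (volume_slab_le_eNorm hv (by positivity) hR0)
    _ = _ := by
        rw [← ENNReal.ofReal_coe_nnreal, ← ENNReal.ofReal_pow K.coe_nonneg,
          ← ENNReal.ofReal_mul (by positivity), hδ]
        ring_nf

end

theorem measure_nonresonant_actions_general (d : ℕ) (τ : ℝ) (hτ : (d : ℝ) - 1 < τ)
    (L : ℝ) (ω₀ : (Fin d → ℝ) → (Fin d → ℝ))
    (B : Set (Fin d → ℝ))
    (hbdd : Bornology.IsBounded (ω₀ '' B))
    (hLipInv : ∀ y ∈ B, ∀ y' ∈ B, eNorm (y - y') ≤ L * eNorm (ω₀ y - ω₀ y')) :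
    ∃ c' : ℝ, 0 < c' ∧ ∀ γ : ℝ, 0 < γ →
      volume (B \ {y ∈ B | IsDiophantine γ τ (ω₀ y)}) ≤ ENNReal.ofReal (c' * γ) := by
  obtain ⟨R, hR0, hR⟩ := hbdd.exists_pos_norm_le
  set K : ℝ≥0 := L.toNNReal * NNReal.sqrt d
  set C : ℝ := (K : ℝ) ^ d * (√d * 2 * (2 * R) ^ (d - 1))
  have hS := summable_eNorm_intCast_rpow_neg (d := d) (p := τ + 1) (by linarith)
  set S := ∑' n : Fin d → ℤ, eNorm (fun i => (n i : ℝ)) ^ (-(τ + 1))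
  have hC : 0 ≤ C := by positivity
  have hS0 : 0 ≤ S := tsum_nonneg fun n => Real.rpow_nonneg (eNorm_nonneg _) _
  refine ⟨C * S + 1, by positivity, fun γ hγ => ?_⟩
  calc volume (B \ {y ∈ B | IsDiophantine γ τ (ω₀ y)})
      ≤ ∑' n, volume (resonantZone ω₀ B γ τ n) :=
        (measure_mono (diff_setOf_isDiophantine_subset_iUnion_resonantZone ω₀ B γ τ)).trans
          (measure_iUnion_le _)
    _ ≤ ∑' n : Fin d → ℤ, ENNReal.ofReal (C * γ * eNorm (fun i => (n i : ℝ)) ^ (-(τ + 1))) :=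
        ENNReal.tsum_le_tsum fun n => volume_resonantZone_le
          (fun y hy y' hy' => dist_le_of_eNorm_sub_le (hLipInv y hy y' hy'))
          (fun y hy => hR _ (mem_image_of_mem ω₀ hy)) hR0.le hγ.le τ n
    _ = ENNReal.ofReal (C * γ * S) := by
        rw [← ENNReal.ofReal_tsum_of_nonneg
          (fun n => mul_nonneg (by positivity) (Real.rpow_nonneg (eNorm_nonneg _) _))
          (hS.mul_left _), tsum_mul_left]
    _ ≤ ENNReal.ofReal ((C * S + 1) * γ) := ENNReal.ofReal_le_ofReal (by nlinarith)

/-- Pull-back of the Diophantine measure estimate by a frequency map with Lipschitz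
inverse: if `ω₀ : B → ℝ^d` is injective on the closed ball `B` with `L`-Lipschitz
inverse and bounded image, then `volume (B \ B_γ) ≤ c'·γ` for all `γ > 0`, where
`B_γ = {y ∈ B : ω₀(y) is (γ,τ)-Diophantine}`. -/
theorem measure_nonresonant_actions (d : ℕ) (hd : 1 ≤ d) (τ : ℝ) (hτ : (d : ℝ) - 1 < τ)
    (y₀ : Fin d → ℝ) (r : ℝ) (hr : 0 ≤ r) (L : ℝ) (hL : 0 ≤ L)
    (ω₀ : (Fin d → ℝ) → (Fin d → ℝ))
    (B : Set (Fin d → ℝ)) (hB : B = {y | eNorm (y - y₀) ≤ r})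
    (hbdd : Bornology.IsBounded (ω₀ '' B))
    (hLipInv : ∀ y ∈ B, ∀ y' ∈ B, eNorm (y - y') ≤ L * eNorm (ω₀ y - ω₀ y')) :
    ∃ c' : ℝ, 0 < c' ∧ ∀ γ : ℝ, 0 < γ →
      volume (B \ {y ∈ B | IsDiophantine γ τ (ω₀ y)}) ≤ ENNReal.ofReal (c' * γ) :=
  measure_nonresonant_actions_general d τ hτ L ω₀ B hbdd hLipInv
end
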